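/- arXiv:quant-ph/0409113 — 3 statements merged into one kernel-verified Lean document; each statement's English description precedes it below -/
import Mathlib

section
/- (Gale–Ryser) There exists a 0-1 matrix with row sums given by the partition λ and column sums given by the partition μ if and only if λ is dominated by the conjugate partition μᵗ, i.e., Σ_{i≤k} λ_i ≤ Σ_{i≤k} μᵗ_i for all k, with equality of total sums |λ| = |μ|. -/
/-!
Necessity: the first `k` rows of a 0-1 matrix put at most `min μ_j k` ones into column `j`, and
`∑_j min μ_j k = ∑_{i<k} μᵗ_i`.

Sufficiency: conjugation reverses dominance. If exactly `m` parts of `λ` exceed `k`, then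
`∑_i (λ_i - k)₊ = ∑_{i<m} λ_i - m k ≤ ∑_j min μ_j m - m k ≤ ∑_{j ≥ k} μ_j`, which, as `|λ| = |μ|`,
is `μ ≺ λᵗ` at `k`.
Now `λᵗ` is the vector of column sums `ν` of the Young diagram of `λ`. Take the first column `b`
with `ν_b < μ_b` and a column `a < b` with `ν_a > μ_a`; as `μ` is antitone, some row has a one in
column `a` and a zero in column `b`. Moving that one keeps `μ ≺ ν` (the prefix sums of `ν` on
`(a, b]` exceed those of `μ` strictly) and decreases `∑_j (ν_j - μ_j)₊`, so the process ends with
column sums `μ`.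
-/

open Finset

namespace GaleRyser

def conjugate (f : ℕ → ℕ) (n i : ℕ) : ℕ := #{j ∈ range n | i < f j}

def Dominated (f g : ℕ → ℕ) : Prop := ∀ k, ∑ i ∈ range k, f i ≤ ∑ i ∈ range k, g i

def IsTransfer (a b : ℕ) (ν ν' : ℕ → ℕ) : Prop :=
  ∀ j, ν' j + (if j = a then 1 else 0) = ν j + (if j = b then 1 else 0)

theorem sum_range_ite_lt (m k : ℕ) : ∑ j ∈ range k, (if j < m then 1 else 0) = min m k := by
  induction k with
  | zero => simp
  | succ k ih => rw [sum_range_succ, ih]; split_ifs <;> omega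

theorem sum_range_conjugate (f : ℕ → ℕ) (n k : ℕ) :
    ∑ i ∈ range k, conjugate f n i = ∑ j ∈ range n, min (f j) k := by
  simp only [conjugate, card_filter]
  rw [sum_comm]
  exact sum_congr rfl fun j _ => sum_range_ite_lt (f j) k

theorem sum_range_eq_sum_filter_lt {f : ℕ → ℕ} {n : ℕ} (hf : ∀ i, n ≤ i → f i = 0) (k : ℕ) :
    ∑ i ∈ range k, f i = ∑ i ∈ range n with i < k, f i := by
  rw [show {i ∈ range n | i < k} = {i ∈ range k | i < n} by ext; simp; omega,
    sum_filter_of_ne fun i _ hi => not_le.1 fun h => hi (hf i h)]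

theorem sum_fin_filter_lt (f : ℕ → ℕ) (n k : ℕ) :
    ∑ i ∈ univ.filter fun i : Fin n => (i : ℕ) < k, f i = ∑ i ∈ range n with i < k, f i := by
  rw [sum_filter, sum_filter]
  exact Fin.sum_univ_eq_sum_range (fun i => if i < k then f i else 0) n

theorem sum_rowSums_le_sum_min_card {ι κ : Type*} [Fintype ι] [Fintype κ] {A : ι → κ → ℕ}
    (hA : ∀ i j, A i j ≤ 1) (s : Finset ι) :
    ∑ i ∈ s, ∑ j, A i j ≤ ∑ j, min (∑ i, A i j) #s := by
  rw [sum_comm]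
  refine sum_le_sum fun j _ => le_min (sum_le_univ_sum_of_nonneg fun _ => Nat.zero_le _) ?_
  simpa using sum_le_card_nsmul s (A · j) 1 fun i _ => hA i j

theorem dominated_conjugate_of_zero_one_matrix {r c : ℕ} {lam mu : ℕ → ℕ}
    (hlam0 : ∀ i, r ≤ i → lam i = 0) {A : Fin r → Fin c → ℕ} (hA : ∀ i j, A i j ≤ 1)
    (hrow : ∀ i, ∑ j, A i j = lam i) (hcol : ∀ j, ∑ i, A i j = mu j) :
    Dominated lam (conjugate mu c) := by
  intro k
  have hcard : #{i : Fin r | (i : ℕ) < k} ≤ k := by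
    rw [card_filter, Fin.sum_univ_eq_sum_range (fun i => if i < k then 1 else 0),
      sum_range_ite_lt]
    exact min_le_left _ _
  calc ∑ i ∈ range k, lam i = ∑ i ∈ univ.filter fun i : Fin r => (i : ℕ) < k, ∑ j, A i j := by
        simp only [hrow, sum_range_eq_sum_filter_lt hlam0, sum_fin_filter_lt]
    _ ≤ ∑ j, min (∑ i, A i j) #{i : Fin r | (i : ℕ) < k} := sum_rowSums_le_sum_min_card hA _
    _ ≤ ∑ j : Fin c, min (mu j) k :=
        sum_le_sum fun j _ => by rw [hcol]; exact min_le_min_left _ hcard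
    _ = ∑ i ∈ range k, conjugate mu c i := by
        rw [sum_range_conjugate, Fin.sum_univ_eq_sum_range (fun j => min (mu j) k)]

theorem exists_sum_range_tsub_add_mul_eq {f : ℕ → ℕ} (hf : Antitone f) {n : ℕ}
    (hf0 : ∀ i, n ≤ i → f i = 0) (k : ℕ) :
    ∃ m, ∑ i ∈ range n, (f i - k) + m * k = ∑ i ∈ range m, f i := by
  have hex : ∃ m, f m ≤ k := ⟨n, by simp [hf0 n le_rfl]⟩
  set m := Nat.find hex
  have hlong : ∀ i < m, k < f i := fun i hi => not_le.1 (Nat.find_min hex hi)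
  have hshort : ∀ i, m ≤ i → f i ≤ k := fun i hi => (hf hi).trans (Nat.find_spec hex)
  have hmn : m ≤ n := Nat.find_min' hex (by simp [hf0 n le_rfl])
  refine ⟨m, ?_⟩
  rw [← sum_range_add_sum_Ico _ hmn,
    sum_eq_zero fun i hi => tsub_eq_zero_of_le (hshort i (mem_Ico.1 hi).1), add_zero,
    ← sum_congr rfl fun i hi => tsub_add_cancel_of_le (hlong i (mem_range.1 hi)).le,
    sum_add_distrib, sum_const, card_range, smul_eq_mul]

theorem dominated_conjugate_of_dominated_conjugate {r c : ℕ} {lam mu : ℕ → ℕ}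
    (hlam : Antitone lam) (hlam0 : ∀ i, r ≤ i → lam i = 0) (hmu0 : ∀ j, c ≤ j → mu j = 0)
    (htot : ∑ i ∈ range r, lam i = ∑ j ∈ range c, mu j) (h : Dominated lam (conjugate mu c)) :
    Dominated mu (conjugate lam r) := by
  intro k
  obtain ⟨m, hm⟩ := exists_sum_range_tsub_add_mul_eq hlam hlam0 k
  have hmu_split :
      ∑ j ∈ range k, mu j + ∑ j ∈ range c with ¬j < k, mu j = ∑ j ∈ range c, mu j := by
    rw [sum_range_eq_sum_filter_lt hmu0, sum_filter_add_sum_filter_not]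
  have hlam_split :
      ∑ i ∈ range r, (lam i - k) + ∑ i ∈ range r, min (lam i) k = ∑ i ∈ range r, lam i := by
    rw [← sum_add_distrib]
    exact sum_congr rfl fun i _ => Nat.sub_add_min_cancel _ _
  have hcard : #{j ∈ range c | j < k} ≤ k :=
    (card_le_card fun j hj => mem_range.2 (mem_filter.1 hj).2).trans (card_range k).le
  have hhead : ∑ j ∈ range c, min (mu j) m ≤ k * m + ∑ j ∈ range c with ¬j < k, mu j := by
    rw [← sum_filter_add_sum_filter_not (range c) (· < k)]
    gcongr ?_ + ?_
    · calc _ ≤ #{j ∈ range c | j < k} • m :=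
            sum_le_card_nsmul _ _ _ fun _ _ => min_le_right _ _
        _ ≤ k * m := Nat.mul_le_mul_right _ hcard
    · exact sum_le_sum fun _ _ => min_le_left _ _
  have hdom_m := h m
  rw [sum_range_conjugate] at hdom_m ⊢
  linarith

theorem Dominated.exists_transfer {mu ν : ℕ → ℕ} {c : ℕ} (h : Dominated mu ν)
    (htot : ∑ j ∈ range c, mu j = ∑ j ∈ range c, ν j) (hne : ∃ j < c, ν j ≠ mu j) :
    ∃ a b, a < b ∧ b < c ∧ mu a < ν a ∧ ν b < mu b ∧ ∀ j < b, mu j ≤ ν j := by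
  have hex : ∃ b, b < c ∧ ν b < mu b := by
    by_contra! hle
    obtain ⟨j, hj, hne⟩ := hne
    exact hne ((sum_eq_sum_iff_of_le fun i hi => hle i (mem_range.1 hi)).1 htot j
      (mem_range.2 hj)).symm
  set b := Nat.find hex
  obtain ⟨hbc, hb⟩ : b < c ∧ ν b < mu b := Nat.find_spec hex
  have hbelow : ∀ j < b, mu j ≤ ν j := fun j hj =>
    not_lt.1 fun hlt => Nat.find_min hex hj ⟨hj.trans hbc, hlt⟩
  have hprefix : ∑ j ∈ range b, mu j < ∑ j ∈ range b, ν j := by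
    have := h (b + 1)
    rw [sum_range_succ, sum_range_succ] at this
    omega
  obtain ⟨a, ha, hlt⟩ := exists_lt_of_sum_lt hprefix
  exact ⟨a, b, mem_range.1 ha, hbc, hlt, hb, hbelow⟩

theorem IsTransfer.sum_range {a b : ℕ} {ν ν' : ℕ → ℕ} (h : IsTransfer a b ν ν') (k : ℕ) :
    ∑ j ∈ range k, ν' j + (if a < k then 1 else 0) =
      ∑ j ∈ range k, ν j + (if b < k then 1 else 0) := by
  simpa only [sum_add_distrib, sum_ite_eq', mem_range] using
    sum_congr rfl fun j (_ : j ∈ range k) => h j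

theorem Dominated.of_isTransfer {mu ν ν' : ℕ → ℕ} {a b : ℕ} (h : Dominated mu ν)
    (ht : IsTransfer a b ν ν') (ha : mu a < ν a) (hbelow : ∀ j < b, mu j ≤ ν j) :
    Dominated mu ν' := by
  intro k
  have hk := ht.sum_range k
  have := h k
  rcases le_or_gt k a with hka | hak
  · split_ifs at hk <;> omega
  rcases le_or_gt k b with hkb | hbk
  · have hstrict : ∑ j ∈ range k, mu j < ∑ j ∈ range k, ν j :=
      sum_lt_sum (fun j hj => hbelow j ((mem_range.1 hj).trans_le hkb)) ⟨a, mem_range.2 hak, ha⟩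
    split_ifs at hk <;> omega
  · split_ifs at hk <;> omega

theorem IsTransfer.sum_range_tsub_lt {mu ν ν' : ℕ → ℕ} {a b c : ℕ} (h : IsTransfer a b ν ν')
    (hac : a < c) (ha : mu a < ν a) (hb : ν b < mu b) :
    ∑ j ∈ range c, (ν' j - mu j) < ∑ j ∈ range c, (ν j - mu j) := by
  refine sum_lt_sum (fun j _ => ?_) ⟨a, mem_range.2 hac, ?_⟩
  · have := h j
    rcases eq_or_ne j b with rfl | hjb
    · split_ifs at this <;> omega
    · split_ifs at this <;> omega
  · have := h a
    have hab : a ≠ b := by rintro rfl; omega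
    rw [if_pos rfl, if_neg hab] at this
    omega

theorem exists_isTransfer_colSums {r c : ℕ} {A : ℕ → ℕ → ℕ} (hA : ∀ i j, A i j ≤ 1)
    {i a b : ℕ} (hi : i < r) (ha : a < c) (hb : b < c) (hia : A i a = 1) (hib : A i b = 0) :
    ∃ B : ℕ → ℕ → ℕ, (∀ i j, B i j ≤ 1) ∧
      (∀ i, ∑ j ∈ range c, B i j = ∑ j ∈ range c, A i j) ∧
      IsTransfer a b (fun j => ∑ i ∈ range r, A i j) (fun j => ∑ i ∈ range r, B i j) := by
  refine ⟨Function.update A i (A i ∘ Equiv.swap a b), fun i' j => ?_, fun i' => ?_, fun j => ?_⟩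
  · rcases eq_or_ne i' i with rfl | h
    · simpa only [Function.update_self, Function.comp_apply] using hA _ _
    · simpa only [Function.update_of_ne h] using hA _ _
  · rcases eq_or_ne i' i with rfl | h
    · rw [Function.update_self]
      refine Equiv.Perm.sum_comp _ _ _ fun j hj => ?_
      by_contra hjc
      have hja : j ≠ a := by rintro rfl; exact hjc (mem_range.2 ha)
      have hjb : j ≠ b := by rintro rfl; exact hjc (mem_range.2 hb)
      exact hj (Equiv.swap_apply_of_ne_of_ne hja hjb)
    · rw [Function.update_of_ne h]
  · have hrest : ∑ x ∈ (range r).erase i, Function.update A i (A i ∘ Equiv.swap a b) x j =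
        ∑ x ∈ (range r).erase i, A x j :=
      sum_congr rfl fun x hx => by rw [Function.update_of_ne (ne_of_mem_erase hx)]
    beta_reduce
    rw [← add_sum_erase _ _ (mem_range.2 hi), ← add_sum_erase _ (A · j) (mem_range.2 hi),
      hrest, Function.update_self, Function.comp_apply, Equiv.swap_apply_def]
    split_ifs <;> simp_all [add_comm]

theorem exists_colSums_eq_of_dominated {r c : ℕ} {mu : ℕ → ℕ} (hmu : Antitone mu)
    (A : ℕ → ℕ → ℕ) (hA : ∀ i j, A i j ≤ 1) (hdom : Dominated mu fun j => ∑ i ∈ range r, A i j)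
    (htot : ∑ j ∈ range c, mu j = ∑ j ∈ range c, ∑ i ∈ range r, A i j) :
    ∃ B : ℕ → ℕ → ℕ, (∀ i j, B i j ≤ 1) ∧
      (∀ i, ∑ j ∈ range c, B i j = ∑ j ∈ range c, A i j) ∧
      ∀ j < c, ∑ i ∈ range r, B i j = mu j := by
  induction hD : ∑ j ∈ range c, (∑ i ∈ range r, A i j - mu j) using Nat.strong_induction_on
    generalizing A with
  | _ D ih =>
  by_cases hdone : ∀ j < c, ∑ i ∈ range r, A i j = mu j
  · exact ⟨A, hA, fun _ => rfl, hdone⟩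
  push Not at hdone
  obtain ⟨a, b, hab, hbc, ha, hb, hbelow⟩ := hdom.exists_transfer htot hdone
  obtain ⟨i, hi, hlt⟩ : ∃ i ∈ range r, A i b < A i a :=
    exists_lt_of_sum_lt (by have := hmu hab.le; omega)
  have hia : A i a = 1 := by have := hA i a; omega
  have hib : A i b = 0 := by omega
  obtain ⟨B, hB, hBrow, hBcol⟩ :=
    exists_isTransfer_colSums hA (mem_range.1 hi) (hab.trans hbc) hbc hia hib
  have htotB := hBcol.sum_range c
  rw [if_pos (hab.trans hbc), if_pos hbc] at htotB
  obtain ⟨C, hC, hCrow, hCcol⟩ :=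
    ih _ (hD ▸ hBcol.sum_range_tsub_lt (hab.trans hbc) ha hb) B hB
      (hdom.of_isTransfer hBcol ha hbelow) (by omega) rfl
  exact ⟨C, hC, fun i => (hCrow i).trans (hBrow i), hCcol⟩

theorem exists_zero_one_matrix_of_dominated_conjugate {r c : ℕ} {lam mu : ℕ → ℕ}
    (hlam : Antitone lam) (hmu : Antitone mu) (hlam0 : ∀ i, r ≤ i → lam i = 0)
    (hmu0 : ∀ j, c ≤ j → mu j = 0) (htot : ∑ i ∈ range r, lam i = ∑ j ∈ range c, mu j)
    (h : Dominated lam (conjugate mu c)) :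
    ∃ A : Fin r → Fin c → ℕ,
      (∀ i j, A i j ≤ 1) ∧ (∀ i, ∑ j, A i j = lam i) ∧ ∀ j, ∑ i, A i j = mu j := by
  have hlamc : ∀ i, lam i ≤ c := fun i => by
    have h1 := h 1
    simp only [sum_range_one, conjugate] at h1
    exact (hlam (Nat.zero_le i)).trans
      (h1.trans ((card_filter_le _ _).trans (card_range c).le))
  set Y : ℕ → ℕ → ℕ := fun i j => if j < lam i then 1 else 0
  have hYrow : ∀ i, ∑ j ∈ range c, Y i j = lam i := fun i =>
    (sum_range_ite_lt _ _).trans (min_eq_left (hlamc i))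
  have hYcol : (fun j => ∑ i ∈ range r, Y i j) = conjugate lam r :=
    funext fun j => (card_filter _ _).symm
  have hYtot : ∑ j ∈ range c, mu j = ∑ j ∈ range c, ∑ i ∈ range r, Y i j := by
    rw [← htot, ← sum_comm]
    exact (sum_congr rfl fun i _ => hYrow i).symm
  obtain ⟨B, hB, hBrow, hBcol⟩ := exists_colSums_eq_of_dominated hmu Y
    (fun i j => by dsimp only [Y]; split_ifs <;> omega)
    (hYcol ▸ dominated_conjugate_of_dominated_conjugate hlam hlam0 hmu0 htot h) hYtot
  refine ⟨fun i j => B i j, fun i j => hB i j, fun i => ?_, fun j => ?_⟩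
  · rw [Fin.sum_univ_eq_sum_range (B i), hBrow, hYrow]
  · rw [Fin.sum_univ_eq_sum_range (B · j), hBcol j j.2]

end GaleRyser

/-- Gale–Ryser: a 0-1 matrix with row sums `λ` and column sums `μ`
exists iff `λ` is dominated by the conjugate partition `μᵗ`. -/
theorem gale_ryser (N r c : ℕ) (lam mu : ℕ → ℕ)
    (hlam : Antitone lam) (hmu : Antitone mu)
    (hlam0 : ∀ i, r ≤ i → lam i = 0) (hmu0 : ∀ j, c ≤ j → mu j = 0)
    (hlamN : ∑ i ∈ Finset.range r, lam i = N)
    (hmuN : ∑ j ∈ Finset.range c, mu j = N) :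
    (∃ A : Fin r → Fin c → ℕ,
        (∀ i j, A i j ≤ 1) ∧
        (∀ i, ∑ j, A i j = lam (i : ℕ)) ∧
        (∀ j, ∑ i, A i j = mu (j : ℕ))) ↔
      ∀ k, ∑ i ∈ Finset.range k, lam i ≤
        ∑ i ∈ Finset.range k, ((Finset.range c).filter fun j => i + 1 ≤ mu j).card := by
  -- the right-hand side is `GaleRyser.Dominated lam (GaleRyser.conjugate mu c)`: on `ℕ`, `i < m`
  -- unfolds to `i + 1 ≤ m`
  constructor
  · rintro ⟨A, hA, hrow, hcol⟩
    exact GaleRyser.dominated_conjugate_of_zero_one_matrix hlam0 hA hrow hcol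
  · exact GaleRyser.exists_zero_one_matrix_of_dominated_conjugate hlam hmu hlam0 hmu0
      (hlamN.trans hmuN.symm)
end

section
/- (Easy two-qubit necessity via trace inequality form) Let ρ be a density matrix on ℂ²⊗ℂ² with eigenvalues ν_1 ≥ ν_2 ≥ ν_3 ≥ ν_4 and reduced states ρ_A, ρ_B with minimal eigenvalues λ_A, λ_B. Then λ_A ≥ ν_3 + ν_4. -/
open scoped ComplexOrder

/-- Partial trace over the second qubit. -/
noncomputable def ptraceB (ρ : Matrix (Fin 2 × Fin 2) (Fin 2 × Fin 2) ℂ) :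
    Matrix (Fin 2) (Fin 2) ℂ :=
  Matrix.of fun i j => ∑ k, ρ (i, k) (j, k)

/-!
If `v` is a unit eigenvector of `ρ_A` for `λ`, then `λ = ⟨v|ρ_A|v⟩ = Tr (W ρ Wᴴ)` for the
co-isometry `W = ⟨v| ⊗ 1` of rank 2. In an eigenbasis of `ρ` this trace is `∑ₗ μₗ wₗ` with weights
`0 ≤ wₗ ≤ 1` summing to 2, the diagonal of the projection `Wᴴ W`. Such a combination is at least the
sum of the two smallest eigenvalues, because termwise `μ w ≥ t w + min (μ - t) 0` for `t = ν 2`.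
-/

open Matrix
open scoped Kronecker

theorem mul_sum_add_sum_min_le_sum_mul {ι : Type*} [Fintype ι] (μ w : ι → ℝ)
    (hw : ∀ l, w l ∈ Set.Icc (0 : ℝ) 1) (t : ℝ) :
    t * ∑ l, w l + ∑ l, min (μ l - t) 0 ≤ ∑ l, μ l * w l := by
  rw [Finset.mul_sum, ← Finset.sum_add_distrib]
  refine Finset.sum_le_sum fun l _ => ?_
  obtain ⟨h0, h1⟩ := hw l
  rcases le_total (μ l) t with h | h
  · rw [min_eq_left (by linarith)]; nlinarith
  · rw [min_eq_right (by linarith)]; nlinarith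

theorem Fintype.sum_comp_eq_of_map_univ_val_eq {ι κ α M : Type*} [Fintype ι] [Fintype κ]
    [AddCommMonoid M] {μ : ι → α} {ν : κ → α}
    (h : Finset.univ.val.map μ = Finset.univ.val.map ν) (g : α → M) :
    ∑ l, g (μ l) = ∑ j, g (ν j) := by
  rw [Finset.sum_eq_multiset_sum, Finset.sum_eq_multiset_sum, ← Function.comp_def,
    ← Function.comp_def, ← Multiset.map_map, ← Multiset.map_map, h]

namespace Matrix

variable {𝕜 ι κ : Type*} [RCLike 𝕜] [Fintype ι] [Fintype κ] [DecidableEq ι] [DecidableEq κ]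

theorem posSemidef_one_sub_conjTranspose_mul_self {V : Matrix κ ι 𝕜} (hV : V * Vᴴ = 1) :
    (1 - Vᴴ * V).PosSemidef := by
  set Q := 1 - Vᴴ * V
  have hQ : Qᴴ = Q := by simp [Q]
  have hQQ : Q * Q = Q := by
    simp only [Q, sub_mul, mul_sub, one_mul, mul_one, Matrix.mul_assoc, ← Matrix.mul_assoc V, hV,
      Matrix.one_mul]
    abel
  simpa [hQ, hQQ] using posSemidef_conjTranspose_mul_self Q

theorem IsHermitian.exists_re_trace_conj_eq_sum {A : Matrix ι ι 𝕜} (hA : A.IsHermitian)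
    {W : Matrix κ ι 𝕜} (hW : W * Wᴴ = 1) :
    ∃ w : ι → ℝ, (∀ l, w l ∈ Set.Icc 0 1) ∧ ∑ l, w l = Fintype.card κ ∧
      RCLike.re (W * A * Wᴴ).trace = ∑ l, hA.eigenvalues l * w l := by
  set U : Matrix ι ι 𝕜 := (hA.eigenvectorUnitary : Matrix ι ι 𝕜)
  set V : Matrix κ ι 𝕜 := W * U
  have hV : V * Vᴴ = 1 := by
    rw [conjTranspose_mul, Matrix.mul_assoc, ← Matrix.mul_assoc U, ← star_eq_conjTranspose,
      Matrix.mem_unitaryGroup_iff.mp hA.eigenvectorUnitary.2, Matrix.one_mul, hW]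
  set D : Matrix ι ι 𝕜 := diagonal (RCLike.ofReal ∘ hA.eigenvalues)
  have hWAW : W * A * Wᴴ = V * D * Vᴴ := by
    conv_lhs => rw [hA.spectral_theorem, Unitary.conjStarAlgAut_apply]
    simp only [V, U, D, conjTranspose_mul, star_eq_conjTranspose, Matrix.mul_assoc]
  set P : Matrix ι ι 𝕜 := Vᴴ * V
  refine ⟨fun l => RCLike.re (P l l), fun l => ⟨?_, ?_⟩, ?_, ?_⟩
  · exact (RCLike.nonneg_iff.mp (posSemidef_conjTranspose_mul_self V).diag_nonneg).1
  · have := (RCLike.nonneg_iff.mp ((posSemidef_one_sub_conjTranspose_mul_self hV).diag_nonneg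
      (i := l))).1
    simpa using this
  · rw [← map_sum, show ∑ l, P l l = P.trace from rfl, trace_mul_comm, hV, trace_one]
    simp
  · rw [hWAW, trace_mul_cycle, trace, map_sum]
    simp [P, D, mul_diagonal, mul_comm]

end Matrix

noncomputable def braKronOne {𝕜 n : Type*} (m : Type*) [RCLike 𝕜] [DecidableEq m] (v : n → 𝕜) :
    Matrix (Unit × m) (n × m) 𝕜 :=
  replicateRow Unit (star v) ⊗ₖ 1

theorem braKronOne_mul_conjTranspose {𝕜 n : Type*} (m : Type*) [RCLike 𝕜] [Fintype n]
    [Fintype m] [DecidableEq m] {v : n → 𝕜} (hv : star v ⬝ᵥ v = 1) :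
    braKronOne m v * (braKronOne m v)ᴴ = 1 := by
  rw [braKronOne, conjTranspose_kronecker, ← mul_kronecker_mul, conjTranspose_replicateRow,
    replicateRow_mul_replicateCol, conjTranspose_one, Matrix.one_mul, star_star, hv,
    ← one_kronecker_one]
  exact congrArg (· ⊗ₖ 1) (Matrix.ext fun _ _ => rfl)

theorem trace_braKronOne_conj_eq_ptraceB (ρ : Matrix (Fin 2 × Fin 2) (Fin 2 × Fin 2) ℂ)
    (v : Fin 2 → ℂ) :
    (braKronOne (Fin 2) v * ρ * (braKronOne (Fin 2) v)ᴴ).trace = star v ⬝ᵥ (ptraceB ρ *ᵥ v) := by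
  simp only [trace, braKronOne, diag_apply, mul_apply, kroneckerMap_apply, replicateRow_apply,
    Pi.star_apply, RCLike.star_def, one_apply, mul_ite, mul_one, mul_zero, ite_mul, zero_mul,
    Fintype.sum_prod_type, Finset.sum_ite_eq, Finset.mem_univ, ↓reduceIte, Fin.sum_univ_two,
    conjTranspose_apply, Finset.univ_unique, PUnit.default_eq_unit, RingHomCompTriple.comp_apply,
    RingHom.id_apply, zero_ne_one, map_zero, add_zero, one_ne_zero, zero_add, Finset.sum_const,
    Finset.card_singleton, one_smul, dotProduct, mulVec, ptraceB, of_apply]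
  ring

theorem bravyi_easy_inequality_general (ρ : Matrix (Fin 2 × Fin 2) (Fin 2 × Fin 2) ℂ)
    (hρ : ρ.PosSemidef)
    (hA : (ptraceB ρ).IsHermitian)
    (ν : Fin 4 → ℝ) (hν : Antitone ν)
    (hspec : Finset.univ.val.map hρ.isHermitian.eigenvalues = Finset.univ.val.map ν) :
    ∀ i, ν 2 + ν 3 ≤ hA.eigenvalues i := by
  intro i
  set v : Fin 2 → ℂ := ⇑(hA.eigenvectorBasis i)
  have hv : star v ⬝ᵥ v = 1 := by
    rw [dotProduct_comm, ← EuclideanSpace.inner_eq_star_dotProduct, inner_self_eq_norm_sq_to_K,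
      hA.eigenvectorBasis.orthonormal.1 i]
    simp
  obtain ⟨w, hw, hw_sum, hw_trace⟩ :=
    hρ.isHermitian.exists_re_trace_conj_eq_sum (braKronOne_mul_conjTranspose (Fin 2) hv)
  have hν_tail : ∑ j, min (ν j - ν 2) 0 = ν 3 - ν 2 := by
    have h01 : ν 1 ≤ ν 0 := hν (by decide)
    have h12 : ν 2 ≤ ν 1 := hν (by decide)
    have h23 : ν 3 ≤ ν 2 := hν (by decide)
    simp only [Fin.sum_univ_four, sub_self, min_self]
    rw [min_eq_right (by linarith), min_eq_right (by linarith), min_eq_left (by linarith)]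
    ring
  calc ν 2 + ν 3 = ν 2 * ∑ l, w l + ∑ l, min (hρ.isHermitian.eigenvalues l - ν 2) 0 := by
        rw [hw_sum, Fintype.sum_comp_eq_of_map_univ_val_eq hspec (fun x => min (x - ν 2) 0),
          hν_tail]
        simp only [Fintype.card_prod, Fintype.card_unique, Fintype.card_fin, one_mul,
          Nat.cast_ofNat]
        ring
    _ ≤ ∑ l, hρ.isHermitian.eigenvalues l * w l := mul_sum_add_sum_min_le_sum_mul _ _ hw _
    _ = hA.eigenvalues i := by
        rw [← hw_trace, trace_braKronOne_conj_eq_ptraceB, hA.eigenvalues_eq]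

/-- Bravyi's easy two-qubit inequality: if `ρ` is a two-qubit density
matrix with decreasingly ordered spectrum `ν₁ ≥ ν₂ ≥ ν₃ ≥ ν₄`, then the minimal
eigenvalue of `ρ_A = Tr_B ρ` is at least `ν₃ + ν₄`. -/
theorem bravyi_easy_inequality (ρ : Matrix (Fin 2 × Fin 2) (Fin 2 × Fin 2) ℂ)
    (hρ : ρ.PosSemidef) (htr : ρ.trace = 1)
    (hA : (ptraceB ρ).IsHermitian)
    (ν : Fin 4 → ℝ) (hν : Antitone ν)
    (hspec : Finset.univ.val.map hρ.isHermitian.eigenvalues = Finset.univ.val.map ν) :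
    ∀ i, ν 2 + ν 3 ≤ hA.eigenvalues i :=
  bravyi_easy_inequality_general ρ hρ hA ν hν hspec
end

section
/- (Polygonal inequality for depth in two-row case via Murnaghan, specialization) If ψ is a pure state of an n-qubit system (unit vector in (ℂ²)^{⊗n}) with single-qubit reduced density matrices ρ^{(i)} having minimal eigenvalues λ_i, then for each i, λ_i ≤ Σ_{j ≠ i} λ_j. -/
/-!
Rotate every qubit of `ψ` into an eigenbasis of its margin. The rotated state `φ` has diagonal
margins, so its weight on `{g | g j = x}` is the `x`-th eigenvalue of `ρ⁽ʲ⁾`; let `good j` index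
the larger one, `μⱼ = N - λⱼ` with `N = ‖ψ‖²`. By the union bound, the weight of `φ` off the line
`{g | g j = good j for all j ≠ i}` is at most `∑_{j ≠ i} λⱼ`. By Cauchy–Schwarz against the
restriction of `φ` to that line, the weight on the line is at most `μᵢ = N - λᵢ`. Adding the two
bounds gives `N ≤ N - λᵢ + ∑_{j ≠ i} λⱼ`.
-/

/-- The reduced density matrix of the `i`-th qubit of an `n`-qubit pure state `ψ`. -/
noncomputable def qubitMargin (n : ℕ) (ψ : (Fin n → Fin 2) → ℂ) (i : Fin n) :
    Matrix (Fin 2) (Fin 2) ℂ :=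
  Matrix.of fun a b =>
    ∑ f ∈ Finset.univ.filter (fun f : Fin n → Fin 2 => f i = 0),
      ψ (Function.update f i a) * (starRingEnd ℂ) (ψ (Function.update f i b))

open Finset ComplexConjugate Matrix Function

section Tensor

variable {ι d : Type*} [Fintype ι] [DecidableEq ι] [Fintype d]

theorem sum_sum_prod_eq_prod_sum_sum {R : Type*} [CommSemiring R] (F : ι → d → d → R) :
    ∑ g : ι → d, ∑ g' : ι → d, ∏ k, F k (g k) (g' k) = ∏ k, ∑ a, ∑ b, F k a b := by
  simp_rw [Fintype.prod_sum]

theorem sum_filter_update {M : Type*} [AddCommMonoid M] [DecidableEq d] (j : ι) (a c : d)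
    (F : (ι → d) → M) :
    ∑ h ∈ univ.filter (· j = c), F (update h j a) = ∑ g ∈ univ.filter (· j = a), F g := by
  refine sum_nbij' (update · j a) (update · j c) ?_ ?_ ?_ ?_ ?_ <;>
    intro h <;> simp +contextual [update_idem, update_eq_self_iff]

theorem mem_image_update_iff [DecidableEq d] (g g' : ι → d) (j : ι) :
    g' ∈ univ.image (update g j) ↔ ∀ k ≠ j, g k = g' k := by
  simp only [mem_image, mem_univ, true_and]
  refine ⟨?_, fun h => ⟨g' j, funext fun k => ?_⟩⟩
  · rintro ⟨b, rfl⟩ k hk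
    simp [hk]
  · by_cases hk : k = j
    · subst hk; simp
    · simp [hk, h k hk]

theorem sum_prod_update_one_mul {R : Type*} [DecidableEq d] [CommSemiring R] (M : Matrix d d R)
    (j : ι) (g : ι → d) (F : (ι → d) → R) :
    ∑ g', (∏ k, (update (1 : ι → Matrix d d R) j M) k (g k) (g' k)) * F g'
      = ∑ b, M (g j) b * F (update g j b) := by
  have hprod : ∀ g' : ι → d, ∏ k, (update (1 : ι → Matrix d d R) j M) k (g k) (g' k)
      = if ∀ k ≠ j, g k = g' k then M (g j) (g' j) else 0 := by
    intro g'
    rw [← mul_prod_erase univ _ (mem_univ j), update_self]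
    have hrest : ∏ k ∈ univ.erase j, (update (1 : ι → Matrix d d R) j M) k (g k) (g' k)
        = ∏ k ∈ univ.erase j, if g k = g' k then 1 else 0 :=
      prod_congr rfl fun k hk => by
        rw [update_of_ne (ne_of_mem_erase hk), Pi.one_apply, one_apply]
    rw [hrest, prod_boole]
    simp [mul_ite]
  have hfilter : univ.filter (fun g' => ∀ k ≠ j, g k = g' k) = univ.image (update g j) := by
    ext g'
    rw [mem_filter, mem_image_update_iff]
    exact and_iff_right (mem_univ g')
  simp_rw [hprod, ite_mul, zero_mul]
  rw [← sum_filter, hfilter, sum_image fun _ _ _ _ h => update_injective g j h]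
  simp only [update_self]

theorem sum_le_sum_image_update_add_sum_sum_filter_ne [DecidableEq d] (p : (ι → d) → ℝ)
    (hp : ∀ g, 0 ≤ p g) (g₀ : ι → d) (i : ι) :
    ∑ g, p g ≤ ∑ g ∈ univ.image (update g₀ i), p g
      + ∑ j ∈ univ.erase i, ∑ g ∈ univ.filter (· j ≠ g₀ j), p g := by
  have hpoint : ∀ g, p g ≤ (if g ∈ univ.image (update g₀ i) then p g else 0)
      + ∑ j ∈ univ.erase i, if g j ≠ g₀ j then p g else 0 := by
    intro g
    have hterm : ∀ j, 0 ≤ if g j ≠ g₀ j then p g else 0 := fun j => by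
      split_ifs <;> simp [hp]
    by_cases hg : g ∈ univ.image (update g₀ i)
    · rw [if_pos hg]
      exact le_add_of_nonneg_right (sum_nonneg fun j _ => hterm j)
    · obtain ⟨j, hji, hj⟩ : ∃ j ≠ i, g j ≠ g₀ j := by
        by_contra! h
        exact hg ((mem_image_update_iff g₀ g i).2 fun k hk => (h k hk).symm)
      rw [if_neg hg, zero_add]
      calc p g = if g j ≠ g₀ j then p g else 0 := (if_pos hj).symm
        _ ≤ _ := single_le_sum (f := fun j => if g j ≠ g₀ j then p g else 0)
            (fun j _ => hterm j) (mem_erase.2 ⟨hji, mem_univ j⟩)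
  refine (sum_le_sum fun g _ => hpoint g).trans_eq ?_
  rw [sum_add_distrib, sum_comm, sum_ite_mem, univ_inter]
  simp only [sum_filter]

/-- The vector `(⊗ₖ V k) φ`, for `φ` a vector of `(ℂ^d)^{⊗ι}` indexed by configurations. -/
noncomputable def tensorMulVec (V : ι → Matrix d d ℂ) (φ : (ι → d) → ℂ) : (ι → d) → ℂ :=
  fun g => ∑ f, (∏ k, V k (g k) (f k)) * φ f

/-- The sesquilinear pairing `φᵀ (⊗ₖ K k) φ̄`. -/
noncomputable def tensorForm (K : ι → Matrix d d ℂ) (φ : (ι → d) → ℂ) : ℂ :=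
  ∑ g, ∑ g', (∏ k, K k (g k) (g' k)) * (φ g * conj (φ g'))

theorem tensorForm_tensorMulVec (K V : ι → Matrix d d ℂ) (φ : (ι → d) → ℂ) :
    tensorForm K (tensorMulVec V φ) = tensorForm (fun k => (V k)ᵀ * K k * (V k)ᴴᵀ) φ := by
  set X : (ι → d) → (ι → d) → (ι → d) → (ι → d) → ℂ := fun g g' f f' =>
    (∏ k, K k (g k) (g' k) * V k (g k) (f k) * conj (V k (g' k) (f' k))) * (φ f * conj (φ f'))
  have hentry : ∀ k a b, ((V k)ᵀ * K k * (V k)ᴴᵀ) a b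
      = ∑ x, ∑ y, K k x y * V k x a * conj (V k y b) := by
    intro k a b
    simp only [mul_apply, transpose_apply, conjTranspose_apply, sum_mul, RCLike.star_def]
    rw [sum_comm]
    exact sum_congr rfl fun _ _ => sum_congr rfl fun _ _ => by ring
  calc tensorForm K (tensorMulVec V φ) = ∑ g, ∑ g', ∑ f, ∑ f', X g g' f f' := by
        refine sum_congr rfl fun g _ => sum_congr rfl fun g' _ => ?_
        rw [tensorMulVec, tensorMulVec, map_sum, sum_mul_sum, mul_sum]
        refine sum_congr rfl fun f _ => ?_
        rw [mul_sum]
        refine sum_congr rfl fun f' _ => ?_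
        simp only [X, map_mul, map_prod, prod_mul_distrib]
        ring
    _ = ∑ g, ∑ f, ∑ f', ∑ g', X g g' f f' :=
        sum_congr rfl fun _ _ => sum_comm.trans (sum_congr rfl fun _ _ => sum_comm)
    _ = ∑ f, ∑ f', ∑ g, ∑ g', X g g' f f' :=
        sum_comm.trans (sum_congr rfl fun _ _ => sum_comm)
    _ = tensorForm (fun k => (V k)ᵀ * K k * (V k)ᴴᵀ) φ := by
        refine sum_congr rfl fun f _ => sum_congr rfl fun f' _ => ?_
        simp only [X, hentry, ← sum_mul]
        exact congrArg (· * _) (sum_sum_prod_eq_prod_sum_sum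
          fun k a b => K k a b * V k a (f k) * conj (V k b (f' k)))

end Tensor

section Qubit

variable {n : ℕ}

theorem qubitMargin_apply (φ : (Fin n → Fin 2) → ℂ) (j : Fin n) (a b : Fin 2) :
    qubitMargin n φ j a b = ∑ g ∈ univ.filter (· j = a), φ g * conj (φ (update g j b)) := by
  rw [qubitMargin, of_apply, ← sum_filter_update j a 0]
  simp only [update_idem]

theorem qubitMargin_apply_self (φ : (Fin n → Fin 2) → ℂ) (j : Fin n) (a : Fin 2) :
    qubitMargin n φ j a a = ∑ g ∈ univ.filter (· j = a), (Complex.normSq (φ g) : ℂ) := by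
  rw [qubitMargin_apply]
  refine sum_congr rfl fun g hg => ?_
  rw [update_eq_self_iff.2 (mem_filter.1 hg).2.symm, Complex.mul_conj]

theorem trace_qubitMargin (φ : (Fin n → Fin 2) → ℂ) (j : Fin n) :
    trace (qubitMargin n φ j) = ∑ g, (Complex.normSq (φ g) : ℂ) := by
  simp only [trace, Matrix.diag_apply, qubitMargin_apply_self]
  exact sum_fiberwise univ (fun g : Fin n → Fin 2 => g j) _

theorem sum_mul_conj_mul_qubitMargin (φ : (Fin n → Fin 2) → ℂ) (i : Fin n) (w : Fin 2 → ℂ) :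
    ∑ x, ∑ y, w x * conj (w y) * qubitMargin n φ i x y
      = ((∑ h ∈ univ.filter (· i = 0), Complex.normSq (∑ x, w x * φ (update h i x)) : ℝ) : ℂ) := by
  push_cast
  calc ∑ x, ∑ y, w x * conj (w y) * qubitMargin n φ i x y
      = ∑ h ∈ univ.filter (· i = 0), ∑ x, ∑ y,
          w x * φ (update h i x) * conj (w y * φ (update h i y)) := by
        simp only [qubitMargin, of_apply, mul_sum]
        symm
        rw [sum_comm]
        refine sum_congr rfl fun x _ => ?_
        rw [sum_comm]
        exact sum_congr rfl fun y _ => sum_congr rfl fun h _ => by rw [map_mul]; ring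
    _ = ∑ h ∈ univ.filter (· i = 0), (Complex.normSq (∑ x, w x * φ (update h i x)) : ℂ) := by
        refine sum_congr rfl fun h _ => ?_
        rw [← Complex.mul_conj, map_sum, sum_mul_sum]

theorem tensorForm_update_one (M : Matrix (Fin 2) (Fin 2) ℂ) (φ : (Fin n → Fin 2) → ℂ)
    (j : Fin n) :
    tensorForm (update 1 j M) φ = ∑ a, ∑ b, M a b * qubitMargin n φ j a b := by
  calc tensorForm (update 1 j M) φ
      = ∑ g, ∑ b, M (g j) b * (φ g * conj (φ (update g j b))) :=
        sum_congr rfl fun g _ => sum_prod_update_one_mul M j g fun g' => φ g * conj (φ g')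
    _ = ∑ a, ∑ g ∈ univ.filter (· j = a), ∑ b, M a b * (φ g * conj (φ (update g j b))) := by
        rw [← sum_fiberwise univ (fun g : Fin n → Fin 2 => g j)]
        refine sum_congr rfl fun a _ => sum_congr rfl fun g hg => ?_
        rw [(mem_filter.1 hg).2]
    _ = ∑ a, ∑ b, M a b * qubitMargin n φ j a b := by
        simp only [qubitMargin_apply, mul_sum]
        exact sum_congr rfl fun a _ => sum_comm

theorem qubitMargin_tensorMulVec (V : Fin n → Matrix (Fin 2) (Fin 2) ℂ)
    (φ : (Fin n → Fin 2) → ℂ) (j : Fin n) (hV : ∀ k ≠ j, V k ∈ unitaryGroup (Fin 2) ℂ) :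
    qubitMargin n (tensorMulVec V φ) j = V j * qubitMargin n φ j * (V j)ᴴ := by
  ext x y
  have hK : (fun k => (V k)ᵀ * update (1 : Fin n → Matrix (Fin 2) (Fin 2) ℂ) j (single x y 1) k
        * (V k)ᴴᵀ)
      = update (1 : Fin n → Matrix (Fin 2) (Fin 2) ℂ) j ((V j)ᵀ * single x y 1 * (V j)ᴴᵀ) := by
    funext k
    by_cases hk : k = j
    · subst hk; simp
    · have hunitary : (V k)ᴴ * V k = 1 := (mem_unitaryGroup_iff').1 (hV k hk)
      simp [hk, ← transpose_mul, hunitary]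
  calc qubitMargin n (tensorMulVec V φ) j x y
      = tensorForm (update 1 j (single x y 1)) (tensorMulVec V φ) := by
        rw [tensorForm_update_one]
        simp [single_apply, ite_and]
    _ = tensorForm (update 1 j ((V j)ᵀ * single x y 1 * (V j)ᴴᵀ)) φ := by
        rw [tensorForm_tensorMulVec, hK]
    _ = (V j * qubitMargin n φ j * (V j)ᴴ) x y := by
        rw [tensorForm_update_one]
        simp only [mul_apply, transpose_apply, conjTranspose_apply, single_apply, RCLike.star_def,
          ite_and, mul_ite, ite_mul, mul_one, mul_zero, zero_mul, sum_ite_eq, mem_univ, if_true,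
          sum_mul]
        rw [sum_comm]
        exact sum_congr rfl fun _ _ => sum_congr rfl fun _ _ => by ring

theorem sum_filter_normSq_eq_of_qubitMargin_eq_diagonal (φ : (Fin n → Fin 2) → ℂ) (i : Fin n)
    (μ : Fin 2 → ℝ) (hφ : qubitMargin n φ i = diagonal fun x => (μ x : ℂ)) (x : Fin 2) :
    ∑ g ∈ univ.filter (· i = x), Complex.normSq (φ g) = μ x := by
  have hx := qubitMargin_apply_self φ i x
  rw [hφ, diagonal_apply_eq] at hx
  exact_mod_cast hx.symm

theorem sum_normSq_update_le_of_qubitMargin_eq_diagonal (φ : (Fin n → Fin 2) → ℂ) (i : Fin n)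
    (μ : Fin 2 → ℝ) (hφ : qubitMargin n φ i = diagonal fun x => (μ x : ℂ)) {m : ℝ}
    (hm : ∀ x, μ x ≤ m) (g : Fin n → Fin 2) :
    ∑ x, Complex.normSq (φ (update g i x)) ≤ m := by
  set z : Fin 2 → ℂ := fun x => φ (update g i x)
  set s := ∑ x, Complex.normSq (z x)
  set T : (Fin n → Fin 2) → ℂ := fun h => ∑ x, conj (z x) * φ (update h i x)
  have hT : T (update g i 0) = s := by
    simp only [T, z, s, update_idem, Complex.ofReal_sum, ← Complex.mul_conj, mul_comm]
  have hsumT : ∑ h ∈ univ.filter (· i = 0), Complex.normSq (T h)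
      = ∑ x, μ x * Complex.normSq (z x) := by
    apply Complex.ofReal_injective
    simp only [T]
    rw [← sum_mul_conj_mul_qubitMargin φ i fun x => conj (z x)]
    simp only [hφ, diagonal_apply, mul_ite, mul_zero, sum_ite_eq, mem_univ, if_true,
      Complex.conj_conj, ← Complex.mul_conj, Complex.ofReal_sum, Complex.ofReal_mul]
    exact sum_congr rfl fun x _ => by ring
  -- `T h` pairs `φ` with `z` along qubit `i`: it equals `s` on the line through `g`, and summed
  -- over all lines it is the margin's quadratic form at `z`, hence at most `m s`.
  have hs_sq : s * s ≤ m * s :=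
    calc s * s = Complex.normSq (T (update g i 0)) := by rw [hT, Complex.normSq_ofReal]
      _ ≤ ∑ h ∈ univ.filter (· i = 0), Complex.normSq (T h) :=
          single_le_sum (fun h _ => Complex.normSq_nonneg (T h)) (by simp)
      _ = ∑ x, μ x * Complex.normSq (z x) := hsumT
      _ ≤ ∑ x, m * Complex.normSq (z x) :=
          sum_le_sum fun x _ => mul_le_mul_of_nonneg_right (hm x) (Complex.normSq_nonneg _)
      _ = m * s := (mul_sum _ _ _).symm
  have hs_nonneg : 0 ≤ s := sum_nonneg fun x _ => Complex.normSq_nonneg (z x)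
  have hm_nonneg : 0 ≤ m :=
    (sum_nonneg fun g _ => Complex.normSq_nonneg (φ g)).trans
      ((sum_filter_normSq_eq_of_qubitMargin_eq_diagonal φ i μ hφ 0).trans_le (hm 0))
  nlinarith

theorem polygonal_of_qubitMargin_eq_diagonal (φ : (Fin n → Fin 2) → ℂ)
    (ev : Fin n → Fin 2 → ℝ) (hφ : ∀ k, qubitMargin n φ k = diagonal fun x => (ev k x : ℂ))
    (good : Fin n → Fin 2) (hgood : ∀ k x, ev k x ≤ ev k (good k)) (i : Fin n) :
    ∑ g, Complex.normSq (φ g) - ev i (good i)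
      ≤ ∑ j ∈ univ.erase i, (∑ g, Complex.normSq (φ g) - ev j (good j)) := by
  set p : (Fin n → Fin 2) → ℝ := fun g => Complex.normSq (φ g)
  have hp : ∀ g, 0 ≤ p g := fun g => Complex.normSq_nonneg (φ g)
  have hbad : ∀ j, ∑ g ∈ univ.filter (· j ≠ good j), p g = ∑ g, p g - ev j (good j) := by
    intro j
    rw [← sum_filter_normSq_eq_of_qubitMargin_eq_diagonal φ j _ (hφ j) (good j),
      eq_sub_iff_add_eq, add_comm]
    exact sum_filter_add_sum_filter_not _ _ _
  have hline : ∑ g ∈ univ.image (update good i), p g ≤ ev i (good i) := by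
    rw [sum_image fun _ _ _ _ h => update_injective good i h]
    exact sum_normSq_update_le_of_qubitMargin_eq_diagonal φ i _ (hφ i) (hgood i) good
  calc ∑ g, p g - ev i (good i)
      ≤ ∑ g ∈ univ.image (update good i), p g
          + ∑ j ∈ univ.erase i, ∑ g ∈ univ.filter (· j ≠ good j), p g - ev i (good i) := by
        gcongr
        exact sum_le_sum_image_update_add_sum_sum_filter_ne p hp good i
    _ ≤ ∑ j ∈ univ.erase i, (∑ g, p g - ev j (good j)) := by
        rw [sum_congr rfl fun j _ => hbad j]
        linarith

end Qubit

theorem min_eq_sum_sub_of_forall_le {α : Type*} [AddCommGroup α] [LinearOrder α]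
    [IsOrderedAddMonoid α] (e : Fin 2 → α) {x : Fin 2} (hx : ∀ y, e y ≤ e x) :
    min (e 0) (e 1) = ∑ y, e y - e x := by
  rw [Fin.sum_univ_two]
  obtain rfl | rfl : x = 0 ∨ x = 1 := by fin_cases x <;> simp
  · rw [min_eq_right (hx 1)]; abel
  · rw [min_eq_left (hx 0)]; abel

theorem polygonal_inequalities_general (n : ℕ) (ψ : (Fin n → Fin 2) → ℂ)
    (hherm : ∀ i, (qubitMargin n ψ i).IsHermitian)
    (lam : Fin n → ℝ)
    (hlam : ∀ i, lam i = min ((hherm i).eigenvalues 0) ((hherm i).eigenvalues 1)) :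
    ∀ i, lam i ≤ ∑ j ∈ Finset.univ.erase i, lam j := by
  intro i
  set φ := tensorMulVec (fun k => star ((hherm k).eigenvectorUnitary : Matrix (Fin 2) (Fin 2) ℂ)) ψ
  have hdiag : ∀ k, qubitMargin n φ k = diagonal fun x => ((hherm k).eigenvalues x : ℂ) := by
    intro k
    rw [qubitMargin_tensorMulVec _ _ _ fun k _ =>
      Unitary.star_mem (hherm k).eigenvectorUnitary.prop]
    simpa [star_eq_conjTranspose, comp_def] using (hherm k).conjStarAlgAut_star_eigenvectorUnitary
  have htrace : ∀ k, ∑ x, (hherm k).eigenvalues x = ∑ g, Complex.normSq (φ g) := by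
    intro k
    have h := trace_qubitMargin φ k
    rw [hdiag k, trace_diagonal] at h
    exact_mod_cast h
  choose good hgood using fun k => Finite.exists_max (hherm k).eigenvalues
  have hlam_eq : ∀ k, lam k = ∑ g, Complex.normSq (φ g) - (hherm k).eigenvalues (good k) :=
    fun k => by rw [hlam k, min_eq_sum_sub_of_forall_le _ (hgood k), htrace k]
  simp only [hlam_eq]
  exact polygonal_of_qubitMargin_eq_diagonal φ _ hdiag good hgood i

/-- polygonal inequalities: for a pure `n`-qubit state, the minimal
eigenvalues `λᵢ` of the single-qubit margins satisfy `λᵢ ≤ Σ_{j ≠ i} λⱼ`. -/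
theorem polygonal_inequalities (n : ℕ) (ψ : (Fin n → Fin 2) → ℂ)
    (hunit : ∑ f, Complex.normSq (ψ f) = 1)
    (hherm : ∀ i, (qubitMargin n ψ i).IsHermitian)
    (lam : Fin n → ℝ)
    (hlam : ∀ i, lam i = min ((hherm i).eigenvalues 0) ((hherm i).eigenvalues 1)) :
    ∀ i, lam i ≤ ∑ j ∈ Finset.univ.erase i, lam j :=
  polygonal_inequalities_general n ψ hherm lam hlam
end
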